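/- arXiv:math/0308140 — 3 statements merged into one kernel-verified Lean document; each statement's English description precedes it below -/
import Mathlib

section
/- Let β > 1 and suppose d_β(1) is Sturmian over {a,b} with slope α, where 0 ≤ a < b = ⌊β⌋ are integers and α ∈ (0,1) is irrational. Then the closure of the set {T_β^n(1) : n ≥ 0} has Lebesgue measure zero. -/
noncomputable def Tb (β x : ℝ) : ℝ := β * x - ⌊β * x⌋

noncomputable def dB1 (β : ℝ) (n : ℕ) : ℤ := ⌊β * (Tb β)^[n] 1⌋

open Finset MeasureTheory Filter Topology

lemma orb_bounds (β : ℝ) (n : ℕ) :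
    0 ≤ (Tb β)^[n] 1 ∧ (Tb β)^[n] 1 ≤ 1 := by
  cases n with
  | zero => norm_num
  | succ n =>
    rw [Function.iterate_succ_apply']
    have : Tb β ((Tb β)^[n] 1) = Int.fract (β * (Tb β)^[n] 1) := rfl
    rw [this]
    exact ⟨Int.fract_nonneg _, (Int.fract_lt_one _).le⟩

lemma orb_rec (β : ℝ) (n : ℕ) :
    (Tb β)^[n + 1] 1 = β * (Tb β)^[n] 1 - dB1 β n := by
  rw [Function.iterate_succ_apply']; rfl

lemma orb_tel (β : ℝ) (hβ : 1 < β) (n m : ℕ) :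
    (Tb β)^[n] 1 =
      (∑ k ∈ range m, (dB1 β (n + k) : ℝ) / β ^ (k + 1)) + (Tb β)^[n + m] 1 / β ^ m := by
  have hβ0 : (0:ℝ) < β := lt_trans one_pos hβ
  induction m with
  | zero => simp
  | succ m ih =>
    rw [Finset.sum_range_succ]
    have h1 : (Tb β)^[n + (m+1)] 1 = β * (Tb β)^[n+m] 1 - dB1 β (n+m) := by
      rw [show n + (m+1) = (n+m) + 1 from rfl, orb_rec]
    rw [ih, h1]
    field_simp
    ring

noncomputable def ww (α : ℝ) (n j : ℕ) : ℤ := ⌈α * ((n : ℝ) + (j : ℝ))⌉ - ⌊α * (n : ℝ)⌋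

lemma ww_eq (α : ℝ) (n j : ℕ) : ww α n j = ⌈Int.fract (α * n) + α * j⌉ := by
  have h : α * ((n : ℝ) + (j : ℝ)) = (Int.fract (α * n) + α * j) + (⌊α * (n:ℝ)⌋ : ℤ) := by
    rw [Int.fract]; ring
  rw [ww, h, Int.ceil_add_intCast]; ring

lemma ww_mono (α : ℝ) (n₁ n₂ j : ℕ) (h : Int.fract (α * n₁) ≤ Int.fract (α * n₂)) :
    ww α n₁ j ≤ ww α n₂ j := by
  rw [ww_eq, ww_eq]
  exact Int.ceil_le_ceil (by linarith)

lemma ww_lb (α : ℝ) (n j : ℕ) : ⌈α * (j : ℝ)⌉ ≤ ww α n j := by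
  rw [ww_eq]
  exact Int.ceil_le_ceil (by have := Int.fract_nonneg (α * (n:ℝ)); linarith)

lemma ww_ub (α : ℝ) (n j : ℕ) : ww α n j ≤ ⌈α * (j : ℝ)⌉ + 1 := by
  rw [ww_eq]
  calc ⌈Int.fract (α * n) + α * j⌉ ≤ ⌈α * (j:ℝ) + (1:ℤ)⌉ := by
        apply Int.ceil_le_ceil
        have := (Int.fract_lt_one (α * (n:ℝ))).le
        push_cast
        linarith
    _ = ⌈α * (j:ℝ)⌉ + 1 := Int.ceil_add_intCast _ _

lemma ww_det (α : ℝ) (m : ℕ) (n₁ n₂ : ℕ)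
    (h : ∑ j ∈ range (m+1), ww α n₁ j = ∑ j ∈ range (m+1), ww α n₂ j) :
    ∀ j ∈ range (m+1), ww α n₁ j = ww α n₂ j := by
  rcases le_total (Int.fract (α * n₁)) (Int.fract (α * n₂)) with hle | hle
  · exact (Finset.sum_eq_sum_iff_of_le (fun j _ => ww_mono α n₁ n₂ j hle)).1 h
  · intro j hj
    exact ((Finset.sum_eq_sum_iff_of_le (fun j _ => ww_mono α n₂ n₁ j hle)).1 h.symm j hj).symm

theorem stmt14 (β : ℝ) (hβ : 1 < β) (a b : ℤ) (ha : 0 ≤ a) (hab : a < b)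
    (hb : b = ⌊β⌋) (α : ℝ) (hα : Irrational α) (hα0 : 0 < α) (hα1 : α < 1)
    (hS : ∀ n : ℕ, dB1 β n = a + (b - a) * (⌈α * (n + 1)⌉ - ⌈α * n⌉)) :
    MeasureTheory.volume (closure {x : ℝ | ∃ n : ℕ, (Tb β)^[n] 1 = x}) = 0 := by
  have hβ0 : (0:ℝ) < β := lt_trans one_pos hβ
  -- digit formula through ww
  have hdw : ∀ n k : ℕ, (dB1 β (n + k) : ℤ) = a + (b - a) * (ww α n (k+1) - ww α n k) := by
    intro n k
    rw [hS (n + k)]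
    have e1 : α * (((n + k : ℕ) : ℝ) + 1) = α * ((n : ℝ) + ((k+1 : ℕ) : ℝ)) := by
      push_cast; ring
    have e2 : α * ((n + k : ℕ) : ℝ) = α * ((n : ℝ) + ((k : ℕ) : ℝ)) := by
      push_cast; ring
    rw [e1, e2, ww, ww]
    ring
  -- the main covering estimate
  have key : ∀ m : ℕ,
      MeasureTheory.volume (closure {x : ℝ | ∃ n : ℕ, (Tb β)^[n] 1 = x})
        ≤ ENNReal.ofReal (((m : ℝ) + 2) * (1/β) ^ m) := by
    intro m
    set σ : ℕ → ℤ := fun n => ∑ j ∈ range (m+1), ww α n j with hσ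
    set L : ℤ := ∑ j ∈ range (m+1), ⌈α * (j : ℝ)⌉ with hL
    have hσmem : ∀ n, σ n ∈ Finset.Icc L (L + (m+1)) := by
      intro n
      rw [Finset.mem_Icc]
      constructor
      · exact Finset.sum_le_sum (fun j _ => ww_lb α n j)
      · calc σ n ≤ ∑ j ∈ range (m+1), (⌈α * (j : ℝ)⌉ + 1) :=
              Finset.sum_le_sum (fun j _ => ww_ub α n j)
          _ = L + (m+1) := by
              rw [Finset.sum_add_distrib]
              simp [hL]
    -- prefix sums
    set P : ℕ → ℝ := fun n => ∑ k ∈ range m, (dB1 β (n + k) : ℝ) / β ^ (k + 1) with hP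
    have hPdet : ∀ n₁ n₂ : ℕ, σ n₁ = σ n₂ → P n₁ = P n₂ := by
      intro n₁ n₂ h
      apply Finset.sum_congr rfl
      intro k hk
      have hk' := Finset.mem_range.1 hk
      have h1 : ww α n₁ k = ww α n₂ k :=
        ww_det α m n₁ n₂ h k (Finset.mem_range.2 (by omega))
      have h2 : ww α n₁ (k+1) = ww α n₂ (k+1) :=
        ww_det α m n₁ n₂ h (k+1) (Finset.mem_range.2 (by omega))
      have : (dB1 β (n₁ + k) : ℤ) = dB1 β (n₂ + k) := by
        rw [hdw, hdw, h1, h2]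
      rw [show (dB1 β (n₁ + k) : ℝ) = ((dB1 β (n₁ + k) : ℤ) : ℝ) from rfl, this]
    -- representative value for each σ-class
    classical
    set c : ℤ → ℝ := fun s => if h : ∃ n, σ n = s then P h.choose else 0 with hc
    have hcval : ∀ n : ℕ, c (σ n) = P n := by
      intro n
      have hex : ∃ n', σ n' = σ n := ⟨n, rfl⟩
      rw [hc]
      simp only [dif_pos hex]
      exact hPdet _ _ hex.choose_spec
    -- covering
    have hcover : {x : ℝ | ∃ n : ℕ, (Tb β)^[n] 1 = x} ⊆
        ⋃ s ∈ (Finset.Icc L (L + (m+1)) : Finset ℤ), Set.Icc (c s) (c s + (1/β)^m) := by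
      rintro x ⟨n, rfl⟩
      refine Set.mem_biUnion (hσmem n) ?_
      rw [hcval n]
      have htel := orb_tel β hβ n m
      have hob := orb_bounds β (n + m)
      have hpow : (0:ℝ) < β ^ m := pow_pos hβ0 m
      have hPn : P n = ∑ k ∈ range m, (dB1 β (n + k) : ℝ) / β ^ (k + 1) := rfl
      constructor
      · rw [htel]
        have h0 : 0 ≤ (Tb β)^[n+m] 1 / β ^ m := div_nonneg hob.1 hpow.le
        linarith [hPn]
      · rw [htel]
        have h1 : (Tb β)^[n+m] 1 / β ^ m ≤ (1/β)^m := by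
          rw [div_pow, one_pow]
          gcongr
          exact hob.2
        linarith [hPn]
    have hclosed : IsClosed (⋃ s ∈ (Finset.Icc L (L + (m+1)) : Finset ℤ),
        Set.Icc (c s) (c s + (1/β)^m)) := by
      apply Set.Finite.isClosed_biUnion (Finset.finite_toSet _)
      intro s _
      exact isClosed_Icc
    have hsub := closure_minimal hcover hclosed
    calc MeasureTheory.volume (closure {x : ℝ | ∃ n : ℕ, (Tb β)^[n] 1 = x})
        ≤ MeasureTheory.volume (⋃ s ∈ (Finset.Icc L (L + (m+1)) : Finset ℤ),
            Set.Icc (c s) (c s + (1/β)^m)) := measure_mono hsub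
      _ ≤ ∑ s ∈ Finset.Icc L (L + (m+1)), MeasureTheory.volume (Set.Icc (c s) (c s + (1/β)^m)) :=
            measure_biUnion_finset_le _ _
      _ = ∑ s ∈ Finset.Icc L (L + (m+1)), ENNReal.ofReal ((1/β)^m) := by
            apply Finset.sum_congr rfl
            intro s _
            rw [Real.volume_Icc, add_sub_cancel_left]
      _ = (Finset.Icc L (L + (m+1))).card • ENNReal.ofReal ((1/β)^m) := by
            rw [Finset.sum_const]
      _ ≤ ENNReal.ofReal (((m : ℝ) + 2) * (1/β)^m) := by
            have hcard : (Finset.Icc L (L + (m+1))).card = m + 2 := by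
              rw [Int.card_Icc]
              omega
            rw [hcard, nsmul_eq_mul, show ((m:ℝ)+2) = ((m+2:ℕ):ℝ) by push_cast; ring,
              ENNReal.ofReal_mul (by positivity), ENNReal.ofReal_natCast]
  -- conclude via the limit
  have hr0 : (0:ℝ) ≤ 1/β := by positivity
  have hr1 : 1/β < 1 := by rw [div_lt_one hβ0]; exact hβ
  have hlim : Tendsto (fun m : ℕ => ((m:ℝ)+2) * (1/β)^m) atTop (𝓝 0) := by
    have h1 := tendsto_self_mul_const_pow_of_lt_one hr0 hr1
    have h2 := (tendsto_pow_atTop_nhds_zero_of_lt_one hr0 hr1).const_mul (2:ℝ)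
    have h3 := h1.add h2
    norm_num at h3
    exact h3.congr (fun m => by ring)
  have hlim' : Tendsto (fun m : ℕ => ENNReal.ofReal (((m:ℝ)+2) * (1/β)^m)) atTop (𝓝 0) := by
    simpa using ENNReal.tendsto_ofReal hlim
  have hle := ge_of_tendsto' hlim' key
  exact le_antisymm hle zero_le
end

section
/- (Parry) Let s ∈ ℕ^ℕ be a sequence, not equal to 1,0,0,0,…, such that σ^n(s) < s in the lexicographic order for every n ≥ 1. Then there exists a unique real number β > 1 such that d_β(1) = s. -/
/-- Strict lexicographic order on infinite words. -/
def LexLt {A : Type*} [LT A] (x y : ℕ → A) : Prop :=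
  ∃ m : ℕ, (∀ i, i < m → x i = y i) ∧ x m < y m

namespace Parry

variable {s : ℕ → ℕ} {t : ℝ}

/-- The value of the tail word starting at `n`, evaluated at `t = 1/β`. -/
noncomputable def r (s : ℕ → ℕ) (t : ℝ) (n : ℕ) : ℝ :=
  ∑' k, (s (n + k) : ℝ) * t ^ (k + 1)

lemma s0_pos (hdom : ∀ n : ℕ, 1 ≤ n → LexLt (fun k => s (k + n)) s) : 1 ≤ s 0 := by
  obtain ⟨m, heq, hlt⟩ := hdom 1 le_rfl
  have h : ∀ i, i ≤ m → s i = s 0 := by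
    intro i hi
    induction i with
    | zero => rfl
    | succ j ih =>
      have := heq j (by omega)
      simp only at this
      rw [← ih (by omega)]
      omega
  have hm : s m = s 0 := h m le_rfl
  simp only at hlt
  omega

lemma s_le (hdom : ∀ n : ℕ, 1 ≤ n → LexLt (fun k => s (k + n)) s) (n : ℕ) :
    s n ≤ s 0 := by
  rcases Nat.eq_zero_or_pos n with h | h
  · subst h; exact le_rfl
  obtain ⟨m, heq, hlt⟩ := hdom n h
  rcases Nat.eq_zero_or_pos m with hm | hm
  · subst hm
    have h' : s n < s 0 := by simpa using hlt
    omega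
  · have h' : s n = s 0 := by simpa using heq 0 hm
    omega

lemma summable_r (hdom : ∀ n : ℕ, 1 ≤ n → LexLt (fun k => s (k + n)) s)
    (ht0 : 0 ≤ t) (ht1 : t < 1) (n : ℕ) :
    Summable (fun k => (s (n + k) : ℝ) * t ^ (k + 1)) := by
  have hg : Summable (fun k : ℕ => (s 0 : ℝ) * t ^ (k + 1)) := by
    simpa [pow_succ, mul_comm, mul_assoc, mul_left_comm] using
      ((summable_geometric_of_lt_one ht0 ht1).mul_left ((s 0 : ℝ) * t))
  refine Summable.of_nonneg_of_le (fun k => by positivity) (fun k => ?_) hg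
  have : (s (n + k) : ℝ) ≤ (s 0 : ℝ) := by exact_mod_cast s_le hdom (n + k)
  exact mul_le_mul_of_nonneg_right this (by positivity)

lemma r_nonneg (n : ℕ) (ht0 : 0 ≤ t) : 0 ≤ r s t n :=
  tsum_nonneg fun k => by positivity

lemma r_rec (hdom : ∀ n : ℕ, 1 ≤ n → LexLt (fun k => s (k + n)) s)
    (ht0 : 0 ≤ t) (ht1 : t < 1) (n : ℕ) :
    r s t n = (s n : ℝ) * t + r s t (n + 1) * t := by
  have hsum := summable_r hdom ht0 ht1 n
  have h := Summable.tsum_eq_zero_add hsum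
  have h2 : (fun k : ℕ => (s (n + (k + 1)) : ℝ) * t ^ (k + 1 + 1))
      = fun k : ℕ => ((s (n + 1 + k) : ℝ) * t ^ (k + 1)) * t := by
    funext k
    rw [show n + (k + 1) = n + 1 + k by ring]
    ring
  rw [r, h, h2, tsum_mul_right]
  simp [r]

lemma r_split (hdom : ∀ n : ℕ, 1 ≤ n → LexLt (fun k => s (k + n)) s)
    (ht0 : 0 ≤ t) (ht1 : t < 1) (m n : ℕ) :
    r s t n = (∑ k ∈ Finset.range m, (s (n + k) : ℝ) * t ^ (k + 1))
      + t ^ m * r s t (n + m) := by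
  induction m with
  | zero => simp
  | succ j ih =>
    rw [ih, Finset.sum_range_succ, r_rec hdom ht0 ht1 (n + j)]
    rw [show n + (j + 1) = n + j + 1 by ring]
    ring

lemma r_bound (hdom : ∀ n : ℕ, 1 ≤ n → LexLt (fun k => s (k + n)) s)
    (ht0 : 0 ≤ t) (ht1 : t < 1) (n : ℕ) :
    r s t n ≤ (s 0 : ℝ) * t / (1 - t) := by
  have hg : Summable (fun k : ℕ => (s 0 : ℝ) * t ^ (k + 1)) := by
    simpa [pow_succ, mul_comm, mul_assoc, mul_left_comm] using
      ((summable_geometric_of_lt_one ht0 ht1).mul_left ((s 0 : ℝ) * t))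
  have h1 : r s t n ≤ ∑' k : ℕ, (s 0 : ℝ) * t ^ (k + 1) := by
    refine Summable.tsum_le_tsum (fun k => ?_) (summable_r hdom ht0 ht1 n) hg
    have : (s (n + k) : ℝ) ≤ (s 0 : ℝ) := by exact_mod_cast s_le hdom (n + k)
    exact mul_le_mul_of_nonneg_right this (by positivity)
  have h2 : ∑' k : ℕ, (s 0 : ℝ) * t ^ (k + 1) = (s 0 : ℝ) * t / (1 - t) := by
    have : (fun k : ℕ => (s 0 : ℝ) * t ^ (k + 1)) = fun k : ℕ => ((s 0 : ℝ) * t) * t ^ k := by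
      funext k; ring
    rw [this, tsum_mul_left, tsum_geometric_of_lt_one ht0 ht1]
    ring
  linarith

/-- The key comparison from the lexicographic hypothesis. -/
lemma key (hdom : ∀ n : ℕ, 1 ≤ n → LexLt (fun k => s (k + n)) s)
    (ht0 : 0 ≤ t) (ht1 : t < 1) (hr1 : r s t 0 = 1) {n : ℕ} (hn : 1 ≤ n) :
    ∃ m, (s (n + m) + 1 ≤ s m) ∧
      r s t n = 1 + ((s (n + m) : ℝ) - (s m : ℝ)) * t ^ (m + 1)
        + t ^ (m + 1) * (r s t (n + m + 1) - r s t (m + 1)) := by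
  obtain ⟨m, heq, hlt⟩ := hdom n hn
  simp only at heq hlt
  rw [Nat.add_comm m n] at hlt
  refine ⟨m, by omega, ?_⟩
  have h1 := r_split hdom ht0 ht1 (m + 1) n
  have h2 := r_split hdom ht0 ht1 (m + 1) 0
  rw [hr1] at h2
  simp only [zero_add] at h2
  have hsum : ∑ k ∈ Finset.range m, (s (n + k) : ℝ) * t ^ (k + 1)
      = ∑ k ∈ Finset.range m, (s k : ℝ) * t ^ (k + 1) := by
    refine Finset.sum_congr rfl fun k hk => ?_
    have := heq k (Finset.mem_range.mp hk)
    rw [show n + k = k + n by ring, this]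
  rw [Finset.sum_range_succ] at h1 h2
  rw [hsum] at h1
  have he : n + (m + 1) = n + m + 1 := by ring
  rw [he] at h1
  linear_combination h1 - h2

lemma r_le_one (hdom : ∀ n : ℕ, 1 ≤ n → LexLt (fun k => s (k + n)) s)
    (ht0 : 0 < t) (ht1 : t < 1) (hr1 : r s t 0 = 1) (n : ℕ) : r s t n ≤ 1 := by
  by_contra hcon
  push_neg at hcon
  set M : ℝ := sSup (Set.range (r s t)) with hM
  have hbdd : BddAbove (Set.range (r s t)) := by
    refine ⟨(s 0 : ℝ) * t / (1 - t), ?_⟩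
    rintro x ⟨k, rfl⟩
    exact r_bound hdom ht0.le ht1 k
  have hle : ∀ k, r s t k ≤ M := fun k => le_csSup hbdd ⟨k, rfl⟩
  have hM1 : 1 < M := lt_of_lt_of_le hcon (hle n)
  have hub : ∀ k, r s t k ≤ 1 + t * (M - 1) := by
    intro k
    rcases Nat.eq_zero_or_pos k with hk | hk
    · subst hk; rw [hr1]; nlinarith
    obtain ⟨m, hslt, heq⟩ := key hdom ht0.le ht1 hr1 hk
    have hd : (s (k + m) : ℝ) - (s m : ℝ) ≤ -1 := by
      have : (s (k + m) : ℝ) + 1 ≤ (s m : ℝ) := by exact_mod_cast hslt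
      linarith
    have htp : (0:ℝ) < t ^ (m + 1) := by positivity
    have htle : t ^ (m + 1) ≤ t := by
      calc t ^ (m + 1) ≤ t ^ 1 := pow_le_pow_of_le_one ht0.le ht1.le (by omega)
      _ = t := pow_one t
    have h1 : r s t (k + m + 1) ≤ M := hle _
    have h2 : 0 ≤ r s t (m + 1) := r_nonneg _ ht0.le
    have : r s t k ≤ 1 + t ^ (m + 1) * (M - 1) := by nlinarith
    nlinarith
  have : M ≤ 1 + t * (M - 1) := by
    refine csSup_le ⟨r s t 0, ⟨0, rfl⟩⟩ ?_
    rintro x ⟨k, rfl⟩; exact hub k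
  nlinarith

lemma tail_zero (hdom : ∀ n : ℕ, 1 ≤ n → LexLt (fun k => s (k + n)) s)
    (ht0 : 0 < t) (ht1 : t < 1) {m : ℕ} (h : r s t m = 0) : ∀ j, m ≤ j → s j = 0 := by
  intro j hj
  obtain ⟨k, rfl⟩ := Nat.exists_eq_add_of_le hj
  by_contra hs
  have hterm : (0:ℝ) < (s (m + k) : ℝ) * t ^ (k + 1) := by
    have : (0:ℝ) < (s (m + k) : ℝ) := by
      have : 1 ≤ s (m + k) := by omega
      exact_mod_cast Nat.lt_of_lt_of_le Nat.zero_lt_one this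
    positivity
  have hle : (s (m + k) : ℝ) * t ^ (k + 1) ≤ r s t m :=
    Summable.le_tsum (summable_r hdom ht0.le ht1 m) k (fun i _ => by positivity)
  linarith

lemma r_lt_one (hdom : ∀ n : ℕ, 1 ≤ n → LexLt (fun k => s (k + n)) s)
    (ht0 : 0 < t) (ht1 : t < 1) (hr1 : r s t 0 = 1) {n : ℕ} (hn : 1 ≤ n) :
    r s t n < 1 := by
  obtain ⟨m, hslt, heq⟩ := key hdom ht0.le ht1 hr1 hn
  have hd : (s (n + m) : ℝ) - (s m : ℝ) ≤ -1 := by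
    have : (s (n + m) : ℝ) + 1 ≤ (s m : ℝ) := by exact_mod_cast hslt
    linarith
  have htp : (0:ℝ) < t ^ (m + 1) := by positivity
  have h1 : r s t (n + m + 1) ≤ 1 := r_le_one hdom ht0 ht1 hr1 _
  have h2 : 0 ≤ r s t (m + 1) := r_nonneg _ ht0.le
  rcases eq_or_lt_of_le h2 with h2' | h2'
  · -- r (m+1) = 0 : the tail of s is zero
    have hz : ∀ j, m + 1 ≤ j → s j = 0 := tail_zero hdom ht0 ht1 h2'.symm
    have hz2 : r s t (n + m + 1) = 0 := by
      rw [r]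
      have : (fun k => (s (n + m + 1 + k) : ℝ) * t ^ (k + 1)) = fun _ => (0:ℝ) := by
        funext k
        rw [hz (n + m + 1 + k) (by omega)]
        simp
      rw [this, tsum_zero]
    rw [heq, hz2, ← h2']
    nlinarith
  · rw [heq]
    nlinarith

/-- If `r s t 0 = 1` then `β = t⁻¹` has `d_β(1) = s`. -/
lemma dB1_eq (hdom : ∀ n : ℕ, 1 ≤ n → LexLt (fun k => s (k + n)) s)
    (ht0 : 0 < t) (ht1 : t < 1) (hr1 : r s t 0 = 1) (n : ℕ) :
    dB1 t⁻¹ n = (s n : ℤ) := by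
  have htn : t ≠ 0 := ne_of_gt ht0
  -- main: the orbit of 1 is r
  have hfloor : ∀ k, t⁻¹ * r s t k = (s k : ℝ) + r s t (k + 1) := by
    intro k
    rw [r_rec hdom ht0.le ht1 k]
    field_simp
  have hfl : ∀ k, ⌊t⁻¹ * r s t k⌋ = (s k : ℤ) := by
    intro k
    rw [hfloor k]
    have h0 : 0 ≤ r s t (k + 1) := r_nonneg _ ht0.le
    have h1 : r s t (k + 1) < 1 := r_lt_one hdom ht0 ht1 hr1 (by omega)
    rw [Int.floor_eq_iff]
    push_cast
    constructor <;> linarith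
  have horbit : ∀ k, (Tb t⁻¹)^[k] 1 = r s t k := by
    intro k
    induction k with
    | zero => simp [hr1]
    | succ j ih =>
      rw [Function.iterate_succ_apply', ih, Tb, hfl j, hfloor j]
      push_cast
      ring
  rw [dB1, horbit n, hfl n]

/-- Any `β > 1` whose expansion of 1 is `s` satisfies `r s β⁻¹ 0 = 1`. -/
lemma value_one (hdom : ∀ n : ℕ, 1 ≤ n → LexLt (fun k => s (k + n)) s)
    {β : ℝ} (hβ : 1 < β) (h : ∀ n : ℕ, dB1 β n = (s n : ℤ)) :
    r s β⁻¹ 0 = 1 := by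
  have hβ0 : 0 < β := by linarith
  set u : ℝ := β⁻¹ with hu
  have hu0 : 0 < u := by positivity
  have hu1 : u < 1 := by
    rw [hu, inv_lt_one_iff₀]; right; exact hβ
  set x : ℕ → ℝ := fun n => (Tb β)^[n] 1 with hx
  have hx0 : x 0 = 1 := rfl
  have hxs : ∀ n, x (n + 1) = β * x n - (s n : ℝ) := by
    intro n
    have : x (n + 1) = Tb β (x n) := Function.iterate_succ_apply' _ _ _
    rw [this, Tb]
    have : ⌊β * x n⌋ = (s n : ℤ) := h n
    rw [this]
    push_cast
    ring
  have hx01 : ∀ n, 0 ≤ x n ∧ x n ≤ 1 := by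
    intro n
    induction n with
    | zero => rw [hx0]; norm_num
    | succ j _ =>
      have : x (j + 1) = Tb β (x j) := Function.iterate_succ_apply' _ _ _
      rw [this, Tb]
      constructor
      · have := Int.floor_le (β * x j); linarith
      · have := Int.lt_floor_add_one (β * x j); linarith
  have hpartial : ∀ N, ∑ k ∈ Finset.range N, (s k : ℝ) * u ^ (k + 1) = 1 - u ^ N * x N := by
    intro N
    induction N with
    | zero => simp [hx0]
    | succ j ih =>
      rw [Finset.sum_range_succ, ih, hxs j]
      have hβu : u * β = 1 := by rw [hu]; field_simp
      have : u ^ (j + 1) * (β * x j - (s j : ℝ))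
          = u ^ j * (u * β) * x j - (s j : ℝ) * u ^ (j + 1) := by ring
      rw [this, hβu]
      ring
  have htend : Filter.Tendsto (fun N => ∑ k ∈ Finset.range N, (s k : ℝ) * u ^ (k + 1))
      Filter.atTop (nhds 1) := by
    have h1 : Filter.Tendsto (fun N : ℕ => u ^ N * x N) Filter.atTop (nhds 0) := by
      have hp : Filter.Tendsto (fun N : ℕ => u ^ N) Filter.atTop (nhds 0) :=
        tendsto_pow_atTop_nhds_zero_of_lt_one hu0.le hu1
      refine squeeze_zero (fun N => ?_) (fun N => ?_) hp
      · have := (hx01 N).1; positivity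
      · have h1 := (hx01 N).2
        have h2 : (0:ℝ) ≤ u ^ N := by positivity
        nlinarith
    have := Filter.Tendsto.const_sub (1:ℝ) h1
    simp only [sub_zero] at this
    simpa [hpartial] using this
  have hsummable : Summable (fun k => (s (0 + k) : ℝ) * u ^ (k + 1)) :=
    summable_r hdom hu0.le hu1 0
  have hhs : HasSum (fun k => (s (0 + k) : ℝ) * u ^ (k + 1)) (r s u 0) :=
    hsummable.hasSum
  have htend2 := hhs.tendsto_sum_nat
  simp only [zero_add] at htend2
  exact tendsto_nhds_unique htend2 htend

/-- Strict monotonicity of the value function. -/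
lemma value_strict (hdom : ∀ n : ℕ, 1 ≤ n → LexLt (fun k => s (k + n)) s)
    {t₁ t₂ : ℝ} (h0 : 0 < t₁) (h12 : t₁ < t₂) (h1 : t₂ < 1) :
    r s t₁ 0 < r s t₂ 0 := by
  have hs0 : 1 ≤ s 0 := s0_pos hdom
  refine Summable.tsum_lt_tsum_of_nonneg (i := 0) (fun k => by positivity) (fun k => ?_) ?_
    (summable_r hdom (by linarith) h1 0)
  · refine mul_le_mul_of_nonneg_left ?_ (by positivity)
    exact pow_le_pow_left₀ h0.le h12.le _
  · simp only [Nat.add_zero, zero_add, pow_one]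
    have : (1:ℝ) ≤ (s 0 : ℝ) := by exact_mod_cast hs0
    nlinarith

end Parry

theorem stmt18 (s : ℕ → ℕ)
    (hne : s ≠ fun n => if n = 0 then 1 else 0)
    (hdom : ∀ n : ℕ, 1 ≤ n → LexLt (fun k => s (k + n)) s) :
    ∃! β : ℝ, 1 < β ∧ ∀ n : ℕ, dB1 β n = (s n : ℤ) := by
  classical
  have hs0 : 1 ≤ s 0 := Parry.s0_pos hdom
  set g : ℝ → ℝ := fun t => ∑' k, (s k : ℝ) * t ^ (k + 1) with hg
  have hgr : ∀ t : ℝ, Parry.r s t 0 = g t := by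
    intro t
    rw [Parry.r, hg]
    simp only [zero_add]
  have hsummable : ∀ t : ℝ, 0 ≤ t → t < 1 → Summable (fun k => (s k : ℝ) * t ^ (k + 1)) := by
    intro t h0 h1
    have := Parry.summable_r (s := s) hdom h0 h1 0
    simpa using this
  -- find a < 1 with g a ≥ 1
  obtain ⟨a, ha0, ha1, hga⟩ : ∃ a : ℝ, 0 < a ∧ a < 1 ∧ 1 ≤ g a := by
    rcases le_or_gt 2 (s 0) with h2 | h2
    · refine ⟨3/4, by norm_num, by norm_num, ?_⟩
      have hsum := hsummable (3/4 : ℝ) (by norm_num) (by norm_num)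
      have hle : (s 0 : ℝ) * (3/4 : ℝ) ^ (0 + 1) ≤ g (3/4) :=
        Summable.le_tsum hsum 0 (fun i _ => by positivity)
      simp only [zero_add, pow_one] at hle
      have : (2:ℝ) ≤ (s 0 : ℝ) := by exact_mod_cast h2
      nlinarith
    · -- s 0 = 1, so there is j ≥ 1 with s j ≥ 1
      have hs01 : s 0 = 1 := by omega
      have hj : ∃ j, 1 ≤ j ∧ 1 ≤ s j := by
        by_contra hcon
        push_neg at hcon
        apply hne
        funext n
        rcases Nat.eq_zero_or_pos n with hn | hn
        · simp [hn, hs01]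
        · have := hcon n hn
          simp only [if_neg (by omega : n ≠ 0)]
          omega
      obtain ⟨j, hj1, hjs⟩ := hj
      set a : ℝ := ((j : ℝ) + 1) / ((j : ℝ) + 2) with ha
      have hj2 : (0:ℝ) < (j : ℝ) + 2 := by positivity
      have ha0 : 0 < a := by positivity
      have ha1 : a < 1 := by
        rw [ha, div_lt_one hj2]; linarith
      refine ⟨a, ha0, ha1, ?_⟩
      have hsum := hsummable a ha0.le ha1
      have hfin : (s 0 : ℝ) * a ^ 1 + (s j : ℝ) * a ^ (j + 1) ≤ g a := by
        have := Summable.sum_le_tsum ({0, j} : Finset ℕ) (fun i _ => by positivity) hsum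
        rwa [Finset.sum_pair (by omega : 0 ≠ j), zero_add] at this
      have hbern : 1 - ((j:ℝ) + 1) / ((j:ℝ) + 2) ≤ a ^ (j + 1) := by
        have h := one_add_mul_le_pow (a := -(1 / ((j:ℝ) + 2))) (by
          have : (1:ℝ) / ((j:ℝ) + 2) ≤ 1 := by
            rw [div_le_one hj2]; linarith
          linarith) (j + 1)
        have he : (1:ℝ) + -(1 / ((j:ℝ) + 2)) = a := by
          rw [ha]; field_simp; ring
        rw [he] at h
        push_cast at h
        have he2 : (1:ℝ) + ((j:ℝ) + 1) * -(1 / ((j:ℝ) + 2)) = 1 - ((j:ℝ)+1)/((j:ℝ)+2) := by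
          field_simp; ring
        rw [he2] at h
        exact h
      have hs0r : (1:ℝ) ≤ (s 0 : ℝ) := by exact_mod_cast hs0
      have hjsr : (1:ℝ) ≤ (s j : ℝ) := by exact_mod_cast hjs
      have hap : (0:ℝ) < a ^ (j + 1) := by positivity
      have h1 : a + a ^ (j + 1) ≤ g a := by
        have h2 : a ≤ (s 0 : ℝ) * a ^ 1 := by nlinarith
        have h3 : a ^ (j + 1) ≤ (s j : ℝ) * a ^ (j + 1) := by nlinarith
        linarith
      have h4 : (1:ℝ) ≤ a + a ^ (j + 1) := by
        rw [ha]
        linarith [hbern]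
      linarith
  -- continuity of g on [0, a]
  have hcont : ContinuousOn g (Set.Icc 0 a) := by
    rw [hg]
    refine continuousOn_tsum (u := fun k => (s 0 : ℝ) * a ^ (k + 1))
      (fun i => (continuousOn_const.mul ((continuousOn_pow _)))) ?_ ?_
    · simpa [pow_succ, mul_comm, mul_assoc, mul_left_comm] using
        ((summable_geometric_of_lt_one ha0.le ha1).mul_left ((s 0 : ℝ) * a))
    · intro n x hx
      obtain ⟨hx0, hx1⟩ := hx
      rw [Real.norm_eq_abs, abs_of_nonneg (by positivity)]
      have h1 : (s n : ℝ) ≤ (s 0 : ℝ) := by exact_mod_cast Parry.s_le hdom n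
      have h2 : x ^ (n+1) ≤ a ^ (n+1) := pow_le_pow_left₀ hx0 hx1 _
      have h3 : (0:ℝ) ≤ x ^ (n+1) := by positivity
      show (s n : ℝ) * x ^ (n+1) ≤ (s 0 : ℝ) * a ^ (n+1)
      nlinarith
  have hg0 : g 0 = 0 := by
    rw [hg]
    simp
  have hiv : (1:ℝ) ∈ Set.Icc (g 0) (g a) := by
    rw [hg0]; exact ⟨by norm_num, hga⟩
  obtain ⟨t, ht, hgt⟩ := intermediate_value_Icc ha0.le hcont hiv
  obtain ⟨ht0, hta⟩ := ht
  have ht0' : 0 < t := by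
    rcases eq_or_lt_of_le ht0 with h | h
    · exfalso; rw [← h] at hgt; rw [hg0] at hgt; norm_num at hgt
    · exact h
  have ht1 : t < 1 := lt_of_le_of_lt hta ha1
  have hr1 : Parry.r s t 0 = 1 := by rw [hgr]; exact hgt
  have hβ1 : 1 < t⁻¹ := by
    rw [lt_inv_comm₀] <;> simp [ht0', ht1]
  refine ⟨t⁻¹, ⟨hβ1, fun n => Parry.dB1_eq hdom ht0' ht1 hr1 n⟩, ?_⟩
  rintro β' ⟨hβ'1, hβ'd⟩
  have hval : Parry.r s β'⁻¹ 0 = 1 := Parry.value_one hdom hβ'1 hβ'd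
  have hβ'0 : 0 < β' := by linarith
  have hu0 : 0 < β'⁻¹ := by positivity
  have hu1 : β'⁻¹ < 1 := by rw [inv_lt_one_iff₀]; right; exact hβ'1
  have : β'⁻¹ = t := by
    rcases lt_trichotomy β'⁻¹ t with h | h | h
    · have := Parry.value_strict hdom hu0 h ht1
      rw [hval, hr1] at this; linarith
    · exact h
    · have := Parry.value_strict hdom ht0' h hu1
      rw [hval, hr1] at this; linarith
  rw [← this, inv_inv]
end

section
/- (Parry) For real numbers β, γ > 1, one has β < γ if and only if d_β(1) < d_γ(1) in the lexicographic order. -/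
lemma Tb_eq_fract (β x : ℝ) : Tb β x = Int.fract (β * x) := rfl

lemma iter_nonneg {β : ℝ} (hβ : 1 < β) : ∀ n, 0 ≤ (Tb β)^[n] 1
  | 0 => by norm_num
  | (n+1) => by
      rw [Function.iterate_succ_apply', Tb_eq_fract]
      exact Int.fract_nonneg _

lemma iter_le_one {β : ℝ} (hβ : 1 < β) : ∀ n, (Tb β)^[n] 1 ≤ 1
  | 0 => le_refl 1
  | (n+1) => by
      rw [Function.iterate_succ_apply', Tb_eq_fract]
      exact (Int.fract_lt_one _).le

lemma dB1_nonneg {β : ℝ} (hβ : 1 < β) (n : ℕ) : 0 ≤ dB1 β n :=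
  Int.floor_nonneg.2 (mul_nonneg (by linarith) (iter_nonneg hβ n))

lemma dB1_zero_ge_one {β : ℝ} (hβ : 1 < β) : 1 ≤ dB1 β 0 := by
  have : (1 : ℝ) ≤ β * (Tb β)^[0] 1 := by simp; linarith
  exact Int.le_floor.2 (by exact_mod_cast this)

lemma key_identity {β : ℝ} (hβ : 1 < β) (N : ℕ) :
    (Tb β)^[N] 1 / β ^ N = 1 - ∑ n ∈ Finset.range N, (dB1 β n : ℝ) / β ^ (n + 1) := by
  have hβ0 : (0:ℝ) < β := by linarith
  induction N with
  | zero => simp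
  | succ N ih =>
      rw [Function.iterate_succ_apply', Finset.sum_range_succ]
      have hx : Tb β ((Tb β)^[N] 1) = β * (Tb β)^[N] 1 - (dB1 β N : ℝ) := by
        simp [Tb, dB1]
      have hne : β ^ N ≠ 0 := by positivity
      have hne' : β ^ (N + 1) ≠ 0 := by positivity
      have step : (β * (Tb β)^[N] 1 - (dB1 β N : ℝ)) / β ^ (N + 1)
          = (Tb β)^[N] 1 / β ^ N - (dB1 β N : ℝ) / β ^ (N + 1) := by
        field_simp
        ring
      rw [hx, step, ih]
      ring

/-- main monotonicity lemma -/
lemma main_mono {β γ : ℝ} (hβ : 1 < β) (hγ : 1 < γ) (h : β < γ) :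
    LexLt (dB1 β) (dB1 γ) := by
  by_contra hc
  have hβ0 : (0:ℝ) < β := by linarith
  have hγ0 : (0:ℝ) < γ := by linarith
  -- all digits agree
  have hab : ∀ m, dB1 β m = dB1 γ m := by
    intro m
    induction m using Nat.strong_induction_on with
    | _ m ih =>
      by_contra hne
      -- the partial-sum comparison
      have hsum : ∑ n ∈ Finset.range m, (dB1 γ n : ℝ) / γ ^ (n + 1)
          ≤ ∑ n ∈ Finset.range m, (dB1 β n : ℝ) / β ^ (n + 1) := by
        apply Finset.sum_le_sum
        intro n hn
        rw [← ih n (Finset.mem_range.1 hn)]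
        have h0 : (0:ℝ) ≤ (dB1 β n : ℝ) := by exact_mod_cast dB1_nonneg hβ n
        apply div_le_div_of_nonneg_left h0 (by positivity)
        exact pow_le_pow_left₀ hβ0.le h.le _
      have hkβ := key_identity hβ m
      have hkγ := key_identity hγ m
      have hxy : (Tb β)^[m] 1 / β ^ m ≤ (Tb γ)^[m] 1 / γ ^ m := by
        rw [hkβ, hkγ]; linarith
      have hylow : (0:ℝ) ≤ (Tb γ)^[m] 1 / γ ^ m := by
        have := iter_nonneg hγ m; positivity
      have hxm : (Tb β)^[m] 1 ≤ (Tb γ)^[m] 1 := by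
        have h1 : (Tb β)^[m] 1 = β ^ m * ((Tb β)^[m] 1 / β ^ m) := by
          field_simp
        have h2 : (Tb γ)^[m] 1 = γ ^ m * ((Tb γ)^[m] 1 / γ ^ m) := by
          field_simp
        rw [h1, h2]
        have hpow : β ^ m ≤ γ ^ m := pow_le_pow_left₀ hβ0.le h.le _
        calc β ^ m * ((Tb β)^[m] 1 / β ^ m)
            ≤ β ^ m * ((Tb γ)^[m] 1 / γ ^ m) :=
              mul_le_mul_of_nonneg_left hxy (by positivity)
          _ ≤ γ ^ m * ((Tb γ)^[m] 1 / γ ^ m) :=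
              mul_le_mul_of_nonneg_right hpow hylow
      have hle : dB1 β m ≤ dB1 γ m := by
        apply Int.floor_mono
        calc β * (Tb β)^[m] 1 ≤ β * (Tb γ)^[m] 1 :=
              mul_le_mul_of_nonneg_left hxm hβ0.le
          _ ≤ γ * (Tb γ)^[m] 1 :=
              mul_le_mul_of_nonneg_right h.le (iter_nonneg hγ m)
      exact hc ⟨m, ih, lt_of_le_of_ne hle hne⟩
  -- now derive a contradiction via unboundedness of γ^N
  set c : ℝ := 1 / β - 1 / γ with hc_def
  have hcpos : 0 < c := by
    rw [hc_def]
    have : 1 / γ < 1 / β := by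
      apply one_div_lt_one_div_of_lt hβ0 h
    linarith
  obtain ⟨N, hN⟩ := pow_unbounded_of_one_lt (1 / c) hγ
  have hN' : 1 < γ ^ (N + 1) * c := by
    have hγN : γ ^ N ≤ γ ^ (N + 1) := pow_le_pow_right₀ hγ.le (Nat.le_succ N)
    have : 1 / c < γ ^ (N + 1) := lt_of_lt_of_le hN hγN
    calc (1:ℝ) = (1 / c) * c := by field_simp
      _ < γ ^ (N + 1) * c := by
          exact mul_lt_mul_of_pos_right this hcpos
  -- lower bound on the sum
  have hsum_ge : c ≤ ∑ n ∈ Finset.range (N + 1), (dB1 β n : ℝ) / β ^ (n + 1)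
      - ∑ n ∈ Finset.range (N + 1), (dB1 β n : ℝ) / γ ^ (n + 1) := by
    rw [← Finset.sum_sub_distrib]
    have h0mem : 0 ∈ Finset.range (N + 1) := Finset.mem_range.2 (Nat.succ_pos N)
    have hterm : ∀ n ∈ Finset.range (N + 1),
        (0:ℝ) ≤ (dB1 β n : ℝ) / β ^ (n + 1) - (dB1 β n : ℝ) / γ ^ (n + 1) := by
      intro n _
      have h0 : (0:ℝ) ≤ (dB1 β n : ℝ) := by exact_mod_cast dB1_nonneg hβ n
      have : (dB1 β n : ℝ) / γ ^ (n + 1) ≤ (dB1 β n : ℝ) / β ^ (n + 1) := by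
        apply div_le_div_of_nonneg_left h0 (by positivity)
        exact pow_le_pow_left₀ hβ0.le h.le _
      linarith
    have h0term : c ≤ (dB1 β 0 : ℝ) / β ^ (0 + 1) - (dB1 β 0 : ℝ) / γ ^ (0 + 1) := by
      have h1 : (1:ℝ) ≤ (dB1 β 0 : ℝ) := by exact_mod_cast dB1_zero_ge_one hβ
      rw [hc_def]
      simp only [zero_add, pow_one]
      rw [div_sub_div _ _ (ne_of_gt hβ0) (ne_of_gt hγ0),
          div_sub_div _ _ (ne_of_gt hβ0) (ne_of_gt hγ0)]
      apply div_le_div_of_nonneg_right ?_ (by positivity)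
      nlinarith
    calc c ≤ (dB1 β 0 : ℝ) / β ^ (0 + 1) - (dB1 β 0 : ℝ) / γ ^ (0 + 1) := h0term
      _ ≤ ∑ n ∈ Finset.range (N + 1),
            ((dB1 β n : ℝ) / β ^ (n + 1) - (dB1 β n : ℝ) / γ ^ (n + 1)) :=
          Finset.single_le_sum hterm h0mem
  -- combine
  have hkβ := key_identity hβ (N + 1)
  have hkγ := key_identity hγ (N + 1)
  have hsumeq : ∑ n ∈ Finset.range (N + 1), (dB1 γ n : ℝ) / γ ^ (n + 1)
      = ∑ n ∈ Finset.range (N + 1), (dB1 β n : ℝ) / γ ^ (n + 1) := by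
    apply Finset.sum_congr rfl
    intro n _
    rw [hab n]
  rw [hsumeq] at hkγ
  have hxnn : 0 ≤ (Tb β)^[N+1] 1 / β ^ (N+1) := by
    have := iter_nonneg hβ (N+1); positivity
  have hy_ge : c ≤ (Tb γ)^[N+1] 1 / γ ^ (N+1) := by
    rw [hkγ]
    rw [hkβ] at hxnn
    linarith
  have hy_le_one : (Tb γ)^[N+1] 1 ≤ 1 := iter_le_one hγ (N+1)
  have : γ ^ (N+1) * c ≤ (Tb γ)^[N+1] 1 := by
    calc γ ^ (N+1) * c ≤ γ ^ (N+1) * ((Tb γ)^[N+1] 1 / γ ^ (N+1)) :=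
          mul_le_mul_of_nonneg_left hy_ge (by positivity)
      _ = (Tb γ)^[N+1] 1 := by field_simp
  linarith

lemma lexLt_asymm {x y : ℕ → ℤ} (h1 : LexLt x y) (h2 : LexLt y x) : False := by
  obtain ⟨m, hm, hm'⟩ := h1
  obtain ⟨k, hk, hk'⟩ := h2
  rcases lt_trichotomy m k with h | h | h
  · have := hk m h; omega
  · subst h; omega
  · have := hm k h; omega

theorem stmt19 (β γ : ℝ) (hβ : 1 < β) (hγ : 1 < γ) :
    β < γ ↔ LexLt (dB1 β) (dB1 γ) := by
  constructor
  · exact main_mono hβ hγ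
  · intro h
    by_contra hge
    push_neg at hge
    rcases lt_or_eq_of_le hge with h' | h'
    · exact lexLt_asymm h (main_mono hγ hβ h')
    · subst h'
      obtain ⟨m, _, hm⟩ := h
      exact lt_irrefl _ hm
end
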